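/- arXiv:2212.13162 — 2 statements merged into one kernel-verified Lean document; each statement's English description precedes it below -/
import Mathlib

section
/- Optimality of the generalized conditional expectation (Definition 2): let σ be a density matrix, F a CPTP map, and A Hermitian on the input space. If a Hermitian matrix B solves the Jordan GCE equation for (σ, F, A), then for every Hermitian matrix C on the output space, D_{σ,F}(A,C) − D_{σ,F}(A,B) = ‖C − B‖²_{F(σ)}; in particular D_{σ,F}(A,C) ≥ D_{σ,F}(A,B). -/
open Matrix BigOperators ComplexOrder

noncomputable section

/-- A density matrix: positive semidefinite (hence Hermitian) with unit trace. -/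
def IsDensity {d : Type*} [Fintype d] [DecidableEq d] (ρ : Matrix d d ℂ) : Prop :=
  ρ.PosSemidef ∧ ρ.trace = 1

/-- The Jordan-product map `E_ρ(A) = (ρA + Aρ)/2`. -/
def jordan {d : Type*} [Fintype d] (ρ A : Matrix d d ℂ) : Matrix d d ℂ :=
  ((1 : ℂ)/2) • (ρ * A + A * ρ)

/-- The weighted squared norm `‖A‖²_ρ = Re tr(A² ρ)`. -/
def nsq {d : Type*} [Fintype d] (ρ A : Matrix d d ℂ) : ℝ :=
  (Matrix.trace (A * A * ρ)).re

/-- The channel `F(X) = Σ_i K_i X K_iᴴ` determined by a Kraus family. -/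
def krausMap {n m ι : Type*} [Fintype n] [Fintype m] [Fintype ι]
    (K : ι → Matrix m n ℂ) (X : Matrix n n ℂ) : Matrix m m ℂ :=
  ∑ i, K i * X * (K i)ᴴ

/-- The Hilbert–Schmidt adjoint `F*(Y) = Σ_i K_iᴴ Y K_i`. -/
def krausAdj {n m ι : Type*} [Fintype n] [Fintype m] [Fintype ι]
    (K : ι → Matrix m n ℂ) (Y : Matrix m m ℂ) : Matrix n n ℂ :=
  ∑ i, (K i)ᴴ * Y * K i

/-- Trace preservation: `Σ_i K_iᴴ K_i = 1`. -/
def TracePreserving {n m ι : Type*} [Fintype n] [DecidableEq n] [Fintype m] [Fintype ι]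
    (K : ι → Matrix m n ℂ) : Prop :=
  ∑ i, (K i)ᴴ * K i = 1

/-- The divergence `D_{σ,F}(A,B) = ‖A‖²_σ − 2 Re tr(F*(B)·E_σ(A)) + ‖B‖²_{F(σ)}`. -/
def Dvg {n m ι : Type*} [Fintype n] [Fintype m] [Fintype ι]
    (σ : Matrix n n ℂ) (K : ι → Matrix m n ℂ) (A : Matrix n n ℂ) (B : Matrix m m ℂ) : ℝ :=
  nsq σ A - 2 * (Matrix.trace (krausAdj K B * jordan σ A)).re + nsq (krausMap K σ) B

/-- `B` solves the Jordan GCE equation for `(σ, F, A)`: `E_{F(σ)}(B) = F(E_σ(A))`. -/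
def SolvesGCE {n m ι : Type*} [Fintype n] [Fintype m] [Fintype ι]
    (σ : Matrix n n ℂ) (K : ι → Matrix m n ℂ) (A : Matrix n n ℂ) (B : Matrix m m ℂ) : Prop :=
  jordan (krausMap K σ) B = krausMap K (jordan σ A)

lemma trace_kraus_adj {n m ι : Type*} [Fintype n] [Fintype m] [Fintype ι]
    (K : ι → Matrix m n ℂ) (X : Matrix m m ℂ) (Y : Matrix n n ℂ) :
    Matrix.trace (krausAdj K X * Y) = Matrix.trace (X * krausMap K Y) := by
  simp only [krausAdj, krausMap, Finset.sum_mul, Finset.mul_sum, Matrix.trace_sum]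
  refine Finset.sum_congr rfl fun i _ => ?_
  rw [Matrix.mul_assoc, Matrix.mul_assoc, Matrix.trace_mul_comm]
  simp [Matrix.mul_assoc]

lemma kraus_psd {n m ι : Type*} [Fintype n] [Fintype m] [Fintype ι]
    (K : ι → Matrix m n ℂ) {σ : Matrix n n ℂ} (hσ : σ.PosSemidef) :
    (krausMap K σ).PosSemidef := by
  unfold krausMap
  exact Finset.sum_induction _ _ (fun a b ha hb => ha.add hb) .zero
    (fun i _ => hσ.mul_mul_conjTranspose_same (K i))

lemma psd_trace_re_nonneg {d : Type*} [Fintype d] [DecidableEq d]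
    {M : Matrix d d ℂ} (hM : M.PosSemidef) : 0 ≤ (Matrix.trace M).re := by
  rw [Matrix.trace, Complex.re_sum]
  refine Finset.sum_nonneg fun j _ => ?_
  have h := hM.dotProduct_mulVec_nonneg (Pi.single j 1)
  have he : star (Pi.single j 1 : d → ℂ) ⬝ᵥ M *ᵥ Pi.single j 1 = M j j := by
    simp [dotProduct, Matrix.mulVec, Pi.single_apply, Finset.sum_ite_eq']
  rw [he] at h
  simpa using (Complex.le_def.mp h).1

/-- Optimality of the GCE. -/
theorem gce_optimality {n m ι : Type*} [Fintype n] [DecidableEq n]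
    [Fintype m] [DecidableEq m] [Fintype ι]
    (σ : Matrix n n ℂ) (hσ : IsDensity σ)
    (K : ι → Matrix m n ℂ) (hK : TracePreserving K)
    (A : Matrix n n ℂ) (hA : A.IsHermitian)
    (B : Matrix m m ℂ) (hB : B.IsHermitian)
    (hGCE : SolvesGCE σ K A B) :
    ∀ C : Matrix m m ℂ, C.IsHermitian →
      Dvg σ K A C - Dvg σ K A B = nsq (krausMap K σ) (C - B) ∧
      Dvg σ K A B ≤ Dvg σ K A C := by
  intro C hC
  set τ := krausMap K σ with hτdef
  have hτ : τ.PosSemidef := kraus_psd K hσ.1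
  have key : ∀ X : Matrix m m ℂ, Matrix.trace (krausAdj K X * jordan σ A)
      = Matrix.trace (X * jordan τ B) := fun X => by
    rw [trace_kraus_adj, hGCE]
  have h1 : Matrix.trace (C * (τ * B)) = Matrix.trace (B * (C * τ)) := by
    rw [← Matrix.mul_assoc, Matrix.trace_mul_cycle, Matrix.mul_assoc]
  have h3 : Matrix.trace (B * (τ * B)) = Matrix.trace (B * (B * τ)) := by
    rw [← Matrix.mul_assoc, Matrix.trace_mul_cycle, Matrix.mul_assoc]
  have hz : Matrix.trace (C*C*τ) - 2 * Matrix.trace (C * jordan τ B)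
      - (Matrix.trace (B*B*τ) - 2 * Matrix.trace (B * jordan τ B))
      = Matrix.trace ((C-B)*(C-B)*τ) := by
    simp only [jordan, Matrix.mul_smul, Matrix.smul_mul, Matrix.mul_add, Matrix.add_mul,
      Matrix.sub_mul, Matrix.mul_sub, Matrix.trace_smul, Matrix.trace_add, Matrix.trace_sub,
      smul_eq_mul, Matrix.mul_assoc]
    rw [h1, h3]
    ring
  have heq : Dvg σ K A C - Dvg σ K A B = nsq τ (C - B) := by
    have := congrArg Complex.re hz
    simp only [Complex.sub_re, Complex.mul_re, Complex.re_ofNat, Complex.im_ofNat,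
      zero_mul, sub_zero] at this
    simp only [Dvg, nsq, key, ← hτdef]
    linarith
  refine ⟨heq, ?_⟩
  have herm : (C - B)ᴴ = C - B := hC.sub hB
  have hpsd : ((C - B) * τ * (C - B)ᴴ).PosSemidef := hτ.mul_mul_conjTranspose_same _
  rw [herm] at hpsd
  have ht := psd_trace_re_nonneg hpsd
  have hcyc : Matrix.trace ((C-B) * (C-B) * τ) = Matrix.trace ((C-B) * τ * (C-B)) :=
    (Matrix.trace_mul_cycle (C-B) τ (C-B)).symm
  have hnn : 0 ≤ nsq τ (C - B) := by
    unfold nsq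
    rw [hcyc]
    exact ht
  linarith
end
end

section
/- Rao–Blackwellization by discarding an independent ancilla never increases the error (engine of Corollary 3): let σ be a density matrix indexed by a finite type n, τ a density matrix indexed by a finite type n₀, B a Hermitian matrix on the product index type n × n₀, and a a real number. Then Re tr((Tr₂[(1 ⊗ τ)·B] − a·1)²·σ) ≤ Re tr((B − a·1)²·(σ ⊗ τ)). -/
open Matrix BigOperators ComplexOrder

noncomputable section

open Kronecker

/-- Partial trace over the second tensor factor:
`(Tr₂ M)(i,j) = Σ_k M((i,k),(j,k))`. -/
def ptrace₂ {n n₀ : Type*} [Fintype n₀] (M : Matrix (n × n₀) (n × n₀) ℂ) :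
    Matrix n n ℂ :=
  Matrix.of fun i j => ∑ k, M (i, k) (j, k)


section RBAux

set_option linter.unusedSectionVars false

variable {n n₀ : Type*} [Fintype n] [DecidableEq n] [Fintype n₀] [DecidableEq n₀]

lemma rb_kron_conjT (A : Matrix n n ℂ) (B : Matrix n₀ n₀ ℂ) :
    (A ⊗ₖ B)ᴴ = Aᴴ ⊗ₖ Bᴴ := by
  ext ⟨i, k⟩ ⟨j, l⟩
  simp [conjTranspose_apply, kroneckerMap_apply, mul_comm]

lemma rb_ptrace₂_conjT (M : Matrix (n × n₀) (n × n₀) ℂ) :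
    (ptrace₂ M)ᴴ = ptrace₂ Mᴴ := by
  ext i j
  simp [ptrace₂, conjTranspose_apply]

lemma rb_ptrace₂_sub (M N : Matrix (n × n₀) (n × n₀) ℂ) :
    ptrace₂ (M - N) = ptrace₂ M - ptrace₂ N := by
  ext i j
  simp [ptrace₂, Finset.sum_sub_distrib]

lemma rb_ptrace₂_smul (c : ℂ) (M : Matrix (n × n₀) (n × n₀) ℂ) :
    ptrace₂ (c • M) = c • ptrace₂ M := by
  ext i j
  simp [ptrace₂, Finset.mul_sum]

lemma rb_ptrace₂_one_kron (τ : Matrix n₀ n₀ ℂ) :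
    ptrace₂ ((1 : Matrix n n ℂ) ⊗ₖ τ) = τ.trace • (1 : Matrix n n ℂ) := by
  ext i j
  simp [ptrace₂, kroneckerMap_apply, Matrix.trace, Matrix.one_apply, Finset.mul_sum,
    Matrix.diag, mul_comm]

lemma rb_ptrace₂_comm (τ : Matrix n₀ n₀ ℂ) (C : Matrix (n × n₀) (n × n₀) ℂ) :
    ptrace₂ (((1 : Matrix n n ℂ) ⊗ₖ τ) * C) = ptrace₂ (C * ((1 : Matrix n n ℂ) ⊗ₖ τ)) := by
  ext i j
  simp only [ptrace₂, of_apply, mul_apply, kroneckerMap_apply, Fintype.sum_prod_type,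
    Matrix.one_apply, ite_mul, mul_ite, zero_mul, mul_zero, one_mul, mul_one,
    Finset.sum_ite_eq, Finset.sum_ite_eq', Finset.mem_univ, if_true]
  have h1 : (∑ x : n₀, ∑ x_1 : n, ∑ x_2 : n₀, if i = x_1 then τ x x_2 * C (x_1, x_2) (j, x) else 0)
      = ∑ x : n₀, ∑ x_2 : n₀, τ x x_2 * C (i, x_2) (j, x) := by
    refine Finset.sum_congr rfl fun x _ => ?_
    rw [Finset.sum_comm]
    simp
  have h2 : (∑ x : n₀, ∑ x_1 : n, ∑ x_2 : n₀, if x_1 = j then C (i, x) (x_1, x_2) * τ x_2 x else 0)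
      = ∑ x : n₀, ∑ x_2 : n₀, C (i, x) (j, x_2) * τ x_2 x := by
    refine Finset.sum_congr rfl fun x _ => ?_
    rw [Finset.sum_comm]
    simp
  rw [h1, h2, Finset.sum_comm]
  exact Finset.sum_congr rfl fun x _ => Finset.sum_congr rfl fun y _ => mul_comm _ _

lemma rb_trace_ptrace₂_mul (M : Matrix (n × n₀) (n × n₀) ℂ) (X : Matrix n n ℂ) :
    (ptrace₂ M * X).trace = (M * (X ⊗ₖ (1 : Matrix n₀ n₀ ℂ))).trace := by
  simp only [Matrix.trace, Matrix.diag, mul_apply, ptrace₂, of_apply, kroneckerMap_apply,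
    Fintype.sum_prod_type, Matrix.one_apply, mul_ite, mul_zero, mul_one,
    Finset.sum_ite_eq, Finset.sum_ite_eq', Finset.mem_univ, if_true, Finset.sum_mul]
  exact Finset.sum_congr rfl fun x _ => Finset.sum_comm

lemma rb_trace_self_conjT_re_nonneg {m : Type*} [Fintype m] (M : Matrix m m ℂ) :
    0 ≤ (Matrix.trace (M * Mᴴ)).re := by
  simp only [Matrix.trace, Matrix.diag, mul_apply, conjTranspose_apply, Complex.re_sum]
  apply Finset.sum_nonneg; intro i _
  apply Finset.sum_nonneg; intro j _
  simp only [Complex.mul_re, Complex.star_def, Complex.conj_re, Complex.conj_im]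
  nlinarith [sq_nonneg ((M i j).re), sq_nonneg ((M i j).im)]

end RBAux

/-- Rao–Blackwellization by discarding an independent ancilla
never increases the error. -/
theorem rao_blackwell_discard_ancilla {n n₀ : Type*} [Fintype n] [DecidableEq n]
    [Fintype n₀] [DecidableEq n₀]
    (σ : Matrix n n ℂ) (hσ : IsDensity σ)
    (τ : Matrix n₀ n₀ ℂ) (hτ : IsDensity τ)
    (B : Matrix (n × n₀) (n × n₀) ℂ) (hB : B.IsHermitian)
    (a : ℝ) :
    (Matrix.trace ((ptrace₂ ((1 ⊗ₖ τ) * B) - (a : ℂ) • 1)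
        * (ptrace₂ ((1 ⊗ₖ τ) * B) - (a : ℂ) • 1) * σ)).re ≤
      (Matrix.trace ((B - (a : ℂ) • 1) * (B - (a : ℂ) • 1) * (σ ⊗ₖ τ))).re := by
  
  obtain ⟨hσpsd, hσtr⟩ := hσ
  obtain ⟨hτpsd, hτtr⟩ := hτ
  set C : Matrix (n × n₀) (n × n₀) ℂ := B - (a : ℂ) • 1 with hC
  set A : Matrix n n ℂ := ptrace₂ ((1 ⊗ₖ τ) * C) with hA
  -- the estimator after discarding the ancilla
  have hAeq : ptrace₂ ((1 ⊗ₖ τ) * B) - (a : ℂ) • 1 = A := by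
    rw [hA, hC, mul_sub, rb_ptrace₂_sub, mul_smul_comm, mul_one, rb_ptrace₂_smul,
      rb_ptrace₂_one_kron, hτtr, one_smul]
  -- Hermitian facts
  have hCH : Cᴴ = C := by
    rw [hC, conjTranspose_sub, conjTranspose_smul, conjTranspose_one, hB.eq,
      Complex.star_def, Complex.conj_ofReal]
  have hτH : τᴴ = τ := hτpsd.1.eq
  have hKH : ((1 : Matrix n n ℂ) ⊗ₖ τ)ᴴ = (1 : Matrix n n ℂ) ⊗ₖ τ := by
    rw [rb_kron_conjT, conjTranspose_one, hτH]
  have hAH : Aᴴ = A := by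
    rw [hA, rb_ptrace₂_conjT, conjTranspose_mul, hCH, hKH, ← rb_ptrace₂_comm]
  -- key trace identity
  have hkey : ∀ X : Matrix n n ℂ, (C * (X ⊗ₖ τ)).trace = (A * X).trace := by
    intro X
    have h : X ⊗ₖ τ = ((1 : Matrix n n ℂ) ⊗ₖ τ) * (X ⊗ₖ (1 : Matrix n₀ n₀ ℂ)) := by
      rw [← mul_kronecker_mul, one_mul, mul_one]
    rw [h, ← mul_assoc, ← rb_trace_ptrace₂_mul, ← rb_ptrace₂_comm, ← hA]
  set D : Matrix (n × n₀) (n × n₀) ℂ := C - A ⊗ₖ (1 : Matrix n₀ n₀ ℂ) with hD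
  have hDH : Dᴴ = D := by
    rw [hD, conjTranspose_sub, hCH, rb_kron_conjT, hAH, conjTranspose_one]
  -- cross terms
  have T2 : (C * (A ⊗ₖ (1 : Matrix n₀ n₀ ℂ)) * (σ ⊗ₖ τ)).trace = (A * A * σ).trace := by
    rw [mul_assoc, ← mul_kronecker_mul]
    rw [one_mul, hkey (A * σ), ← mul_assoc]
  have T3 : ((A ⊗ₖ (1 : Matrix n₀ n₀ ℂ)) * C * (σ ⊗ₖ τ)).trace = (A * A * σ).trace := by
    rw [Matrix.trace_mul_cycle, Matrix.trace_mul_cycle, mul_assoc, ← mul_kronecker_mul,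
      mul_one, hkey (σ * A), ← mul_assoc, Matrix.trace_mul_cycle]
  have T4 : ((A ⊗ₖ (1 : Matrix n₀ n₀ ℂ)) * (A ⊗ₖ (1 : Matrix n₀ n₀ ℂ)) * (σ ⊗ₖ τ)).trace
      = (A * A * σ).trace := by
    rw [← mul_kronecker_mul, ← mul_kronecker_mul, one_mul, trace_kronecker, one_mul, hτtr,
      mul_one]
  -- expand the square
  have hCD : C = D + A ⊗ₖ (1 : Matrix n₀ n₀ ℂ) := by rw [hD]; abel
  have hsplit : (C * C * (σ ⊗ₖ τ)).trace
      = (D * D * (σ ⊗ₖ τ)).trace + (A * A * σ).trace := by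
    have hexp : C * C * (σ ⊗ₖ τ)
        = D * D * (σ ⊗ₖ τ) + (D * (A ⊗ₖ (1 : Matrix n₀ n₀ ℂ)) * (σ ⊗ₖ τ)
          + ((A ⊗ₖ (1 : Matrix n₀ n₀ ℂ)) * D * (σ ⊗ₖ τ)
            + (A ⊗ₖ (1 : Matrix n₀ n₀ ℂ)) * (A ⊗ₖ (1 : Matrix n₀ n₀ ℂ)) * (σ ⊗ₖ τ))) := by
      rw [hCD]; noncomm_ring
    have c1 : (D * (A ⊗ₖ (1 : Matrix n₀ n₀ ℂ)) * (σ ⊗ₖ τ)).trace = 0 := by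
      rw [hD, sub_mul, sub_mul, Matrix.trace_sub, T2, T4, sub_self]
    have c2 : ((A ⊗ₖ (1 : Matrix n₀ n₀ ℂ)) * D * (σ ⊗ₖ τ)).trace = 0 := by
      rw [hD, mul_sub, sub_mul, Matrix.trace_sub, T3, T4, sub_self]
    rw [hexp, Matrix.trace_add, Matrix.trace_add, Matrix.trace_add, c1, c2, T4]
    ring
  -- positivity of the remainder term
  have hpos : 0 ≤ ((D * D * (σ ⊗ₖ τ)).trace).re := by
    obtain ⟨S, hS⟩ := (show ∃ S, σ = Sᴴ * S by open scoped MatrixOrder in exact CStarAlgebra.nonneg_iff_eq_star_mul_self.mp hσpsd.nonneg)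
    obtain ⟨T, hT⟩ := (show ∃ S, τ = Sᴴ * S by open scoped MatrixOrder in exact CStarAlgebra.nonneg_iff_eq_star_mul_self.mp hτpsd.nonneg)
    have hστ : σ ⊗ₖ τ = (S ⊗ₖ T)ᴴ * (S ⊗ₖ T) := by
      rw [hS, hT, mul_kronecker_mul, rb_kron_conjT]
    have h1 : (D * D * (σ ⊗ₖ τ)).trace = (((S ⊗ₖ T) * D) * ((S ⊗ₖ T) * D)ᴴ).trace := by
      rw [hστ, conjTranspose_mul, hDH, ← mul_assoc, Matrix.trace_mul_comm]
      simp only [Matrix.mul_assoc]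
    rw [h1]
    exact rb_trace_self_conjT_re_nonneg _
  rw [hAeq, hsplit, Complex.add_re]
  linarith
end
end
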